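/- (C-regret via Maximal-in-Range restriction) Let 0 < C ≤ 1 and let X' ⊆ X be a nonempty subset such that max_{x∈X'} Σ_{t=1}^T f(x, y_t) ≥ C·max_{x∈X} Σ_{t=1}^T f(x, y_t). Suppose the restriction of Γ to the rows in X' is (κ',δ')-admissible with κ' ≥ 1 and 0 < δ' ≤ 1, let ε ≥ 0, set η = √(δ' / ((1+2ε)Tκ')), let α = (α_1,…,α_N) have independent coordinates each uniformly distributed on [0, 1/η], and suppose that for every α the sequence x_1(α),…,x_{T+1}(α) ∈ X' is an ε-approximate Generalized-FTPL trajectory within X' for α (the trajectory condition holding with the comparisons quantified over x ∈ X'), with each map α ↦ x_t(α) measurable. Then E[ C·max_{x∈X} Σ_{t=1}^T f(x, y_t) − Σ_{t=1}^T f(x_t(α), y_t) ] ≤ 3N√((1+2ε)Tκ'/δ') + εT. -/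

import Mathlib

/-!
Be-the-leader: on the box `[0, 1/η]^N` the trajectory shifted by one round, `x_{t+1}`, is within
`N/η + (T + 1) ε` of the best action of `X'`, which is at least `C` times the best action of `X`.
It remains to bound `E[f(x_{t+1}, y_t) - f(x_t, y_t)]` by `P(x_t ≠ x_{t+1})`. As rows are
distinct, some column `j` then switches. Fix all coordinates of `α` but `α_j`: comparing the
approximate-leader inequalities at `α_j` and at `α_j' > α_j + (1 + 2ε)/δ'` shows that the smaller of
the two switching values of column `j` strictly increases, so a column with at most `κ'` values
switches only on a set of length `κ' (1 + 2ε)/δ'`, i.e. with probability `η κ' (1 + 2ε)/δ'`.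
Summed over `N` columns and `T` rounds this is `N/η` by the choice of `η`. When `ε > N/η` the
trivial bound `T ≤ ε T` suffices.
-/

open Finset MeasureTheory

open Set in
theorem volume_le_of_forall_isChain_length_le {S : Set ℝ} (hS : BddBelow S) {c : ℝ} (hc : 0 ≤ c)
    (k : ℕ)
    (hk : ∀ l : List ℝ, (∀ a ∈ l, a ∈ S) → l.IsChain (fun a b => a + c < b) → l.length ≤ k) :
    volume S ≤ ENNReal.ofReal (k * c) := by
  induction k generalizing S with
  | zero =>
    have hS0 : S = ∅ := eq_empty_of_forall_notMem fun a ha => by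
      simpa using hk [a] (by simpa using ha) (List.isChain_singleton a)
    simp [hS0]
  | succ k ih =>
    rcases S.eq_empty_or_nonempty with rfl | hne
    · simp
    set m := sInf S
    -- Prepending to a chain above `m + c` an element of `S` close to `m` gives a longer chain.
    have hupper : volume (S ∩ Ioi (m + c)) ≤ ENNReal.ofReal (k * c) := by
      refine ih (hS.mono inter_subset_left) fun l hl hchain => ?_
      obtain ⟨a, haS, ha⟩ : ∃ a ∈ S, ∀ b ∈ l.head?, a + c < b := by
        cases l with
        | nil => exact ⟨hne.some, hne.some_mem, by simp⟩
        | cons b l =>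
          have hb : m < b - c := by linarith [mem_Ioi.1 (hl b List.mem_cons_self).2]
          obtain ⟨a, haS, hab⟩ := (csInf_lt_iff hS hne).1 hb
          exact ⟨a, haS, by simp; linarith⟩
      have := hk (a :: l) (by simpa [haS] using fun b hb => (hl b hb).1)
        (List.isChain_cons.2 ⟨ha, hchain⟩)
      simpa using this
    have hcover : S ⊆ Icc m (m + c) ∪ (S ∩ Ioi (m + c)) := fun a ha => by
      rcases le_or_gt a (m + c) with h | h
      · exact Or.inl ⟨csInf_le hS ha, h⟩
      · exact Or.inr ⟨ha, h⟩
    calc volume S ≤ volume (Icc m (m + c)) + volume (S ∩ Ioi (m + c)) :=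
          (measure_mono hcover).trans (measure_union_le _ _)
      _ ≤ ENNReal.ofReal c + ENNReal.ofReal (k * c) := by
          rw [Real.volume_Icc, add_sub_cancel_left]; exact add_le_add_right hupper _
      _ = ENNReal.ofReal ((k + 1 : ℕ) * c) := by
          rw [← ENNReal.ofReal_add hc (by positivity)]; push_cast; ring_nf

theorem measure_pi_le_of_forall_measure_update_le {ι Ω : Type*} [Fintype ι] [DecidableEq ι]
    [MeasurableSpace Ω] {ν : ι → Measure Ω} [∀ i, IsProbabilityMeasure (ν i)]
    {E : Set (ι → Ω)} (hE : MeasurableSet E) (j : ι) {p : ENNReal}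
    (hp : ∀ α, ν j {a | Function.update α j a ∈ E} ≤ p) : Measure.pi ν E ≤ p := by
  have hslice : ∫⋯∫⁻_{j}, E.indicator 1 ∂ν ≤ ∫⋯∫⁻_{j}, (fun _ => p) ∂ν := by
    intro α
    rw [lmarginal_singleton, lmarginal_singleton]
    simp only [lintegral_const, measure_univ, mul_one]
    calc ∫⁻ a, E.indicator 1 (Function.update α j a) ∂ν j
        = ∫⁻ a, (Function.update α j ⁻¹' E).indicator 1 a ∂ν j := rfl
      _ ≤ p := (lintegral_indicator_one ((measurable_update α) hE)).trans_le (hp α)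
  calc Measure.pi ν E = ∫⁻ α, E.indicator 1 α ∂Measure.pi ν := (lintegral_indicator_one hE).symm
    _ ≤ ∫⁻ _, p ∂Measure.pi ν :=
        lintegral_le_of_lmarginal_le {j} (measurable_one.indicator hE) measurable_const hslice
    _ = p := by simp

theorem isProbabilityMeasure_smul_restrict_Icc {η : ℝ} (hη : 0 < η) :
    IsProbabilityMeasure (ENNReal.ofReal η • volume.restrict (Set.Icc (0 : ℝ) (1 / η))) :=
  ⟨by rw [Measure.smul_apply, Measure.restrict_apply_univ, Real.volume_Icc, smul_eq_mul,
      ← ENNReal.ofReal_mul hη.le, sub_zero, mul_one_div_cancel hη.ne', ENNReal.ofReal_one]⟩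

theorem measurable_comp_of_measurableSet_fiber {Ω X β : Type*} [MeasurableSpace Ω] [Countable X]
    [MeasurableSpace β] {φ : Ω → X} (hφ : ∀ x, MeasurableSet {ω | φ ω = x}) (F : X → β) :
    Measurable fun ω => F (φ ω) :=
  letI : MeasurableSpace X := ⊤
  measurable_from_top.comp (measurable_to_countable' hφ)

theorem integrable_comp_of_measurableSet_fiber {Ω X : Type*} [MeasurableSpace Ω] [Finite X]
    {μ : Measure Ω} [IsFiniteMeasure μ] {φ : Ω → X} (hφ : ∀ x, MeasurableSet {ω | φ ω = x})
    (F : X → ℝ) : Integrable (fun ω => F (φ ω)) μ := by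
  obtain ⟨C, hC⟩ := (Set.finite_range fun x => ‖F x‖).bddAbove
  exact .of_bound (measurable_comp_of_measurableSet_fiber hφ F).aestronglyMeasurable C
    (ae_of_all _ fun ω => hC ⟨φ ω, rfl⟩)

theorem measurableSet_ne_of_measurableSet_fiber {Ω X : Type*} [MeasurableSpace Ω] [Countable X]
    {φ ψ : Ω → X} (hφ : ∀ x, MeasurableSet {ω | φ ω = x})
    (hψ : ∀ x, MeasurableSet {ω | ψ ω = x}) : MeasurableSet {ω | φ ω ≠ ψ ω} := by
  have : {ω | φ ω ≠ ψ ω} = ⋃ x, {ω | φ ω = x} \ {ω | ψ ω = x} := by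
    ext ω; simp [eq_comm]
  rw [this]
  exact .iUnion fun x => (hφ x).diff (hψ x)

theorem integral_sub_le_measureReal_ne {Ω X : Type*} [MeasurableSpace Ω] [Finite X]
    {μ : Measure Ω} [IsFiniteMeasure μ] {φ ψ : Ω → X} (hφ : ∀ x, MeasurableSet {ω | φ ω = x})
    (hψ : ∀ x, MeasurableSet {ω | ψ ω = x}) {F : X → ℝ} (hF : ∀ x, F x ∈ Set.Icc (0 : ℝ) 1) :
    ∫ ω, (F (φ ω) - F (ψ ω)) ∂μ ≤ μ.real {ω | φ ω ≠ ψ ω} := by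
  have hU := measurableSet_ne_of_measurableSet_fiber hφ hψ
  have hle : ∀ ω, F (φ ω) - F (ψ ω) ≤ {ω | φ ω ≠ ψ ω}.indicator 1 ω := by
    intro ω
    by_cases h : φ ω = ψ ω
    · simp [h]
    · simp only [Set.indicator_of_mem (show ω ∈ {ω | φ ω ≠ ψ ω} from h), Pi.one_apply]
      linarith [(hF (φ ω)).2, (hF (ψ ω)).1]
  calc ∫ ω, (F (φ ω) - F (ψ ω)) ∂μ ≤ ∫ ω, {ω | φ ω ≠ ψ ω}.indicator 1 ω ∂μ :=
        integral_mono ((integrable_comp_of_measurableSet_fiber hφ F).sub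
          (integrable_comp_of_measurableSet_fiber hψ F)) ((integrable_const 1).indicator hU) hle
    _ = μ.real {ω | φ ω ≠ ψ ω} := integral_indicator_one hU

theorem dotProduct_le_card_mul {ι : Type*} [Fintype ι] {v w : ι → ℝ} {L : ℝ}
    (hv : ∀ i, v i ∈ Set.Icc 0 L) (hw : ∀ i, w i ∈ Set.Icc (0 : ℝ) 1) :
    v ⬝ᵥ w ≤ Fintype.card ι * L := by
  calc v ⬝ᵥ w ≤ ∑ _i : ι, L := sum_le_sum fun i _ => by
        nlinarith [(hv i).1, (hv i).2, (hw i).1, (hw i).2]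
    _ = Fintype.card ι * L := by rw [sum_const, card_univ, nsmul_eq_mul]

section Payoff

variable {X Y : Type*}

def cumulativePayoff (f : X → Y → ℝ) (y : ℕ → Y) (t : ℕ) (x : X) : ℝ :=
  ∑ τ ∈ Icc 1 t, f x (y τ)

variable {f : X → Y → ℝ} {y : ℕ → Y} {T : ℕ}

theorem cumulativePayoff_succ (t : ℕ) (x : X) :
    cumulativePayoff f y (t + 1) x = cumulativePayoff f y t x + f x (y (t + 1)) :=
  sum_Icc_succ_top (by omega) _

theorem cumulativePayoff_mem_Icc (hf : ∀ x y, f x y ∈ Set.Icc (0 : ℝ) 1) (t : ℕ) (x : X) :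
    cumulativePayoff f y t x ∈ Set.Icc (0 : ℝ) t := by
  refine ⟨sum_nonneg fun τ _ => (hf x (y τ)).1, ?_⟩
  calc cumulativePayoff f y t x ≤ ∑ _τ ∈ Icc 1 t, (1 : ℝ) := sum_le_sum fun τ _ => (hf x (y τ)).2
    _ = t := by simp

theorem cumulativePayoff_sub_le (hf : ∀ x y, f x y ∈ Set.Icc (0 : ℝ) 1) {u u' : ℕ}
    (h : u ≤ u' + 1) (h' : u' ≤ u + 1) (z z' : X) :
    cumulativePayoff f y u z - cumulativePayoff f y u' z ≤
      cumulativePayoff f y u z' - cumulativePayoff f y u' z' + 1 := by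
  rcases (by omega : u = u' ∨ u = u' + 1 ∨ u' = u + 1) with rfl | rfl | rfl
  · linarith
  · simp only [cumulativePayoff_succ]; linarith [(hf z (y (u' + 1))).2, (hf z' (y (u' + 1))).1]
  · simp only [cumulativePayoff_succ]; linarith [(hf z (y (u + 1))).1, (hf z' (y (u + 1))).2]

theorem integral_cumulativePayoff_sub_sum_le_horizon [Finite X] {Ω : Type*} [MeasurableSpace Ω]
    {μ : Measure Ω} [IsProbabilityMeasure μ] {xtraj : Ω → ℕ → X}
    (hmeas : ∀ t x₀, MeasurableSet {α | xtraj α t = x₀})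
    (hf : ∀ x y, f x y ∈ Set.Icc (0 : ℝ) 1) (x' : X) :
    ∫ α, (cumulativePayoff f y T x' - ∑ t ∈ Icc 1 T, f (xtraj α t) (y t)) ∂μ ≤ T := by
  calc _ ≤ ∫ _, (T : ℝ) ∂μ := integral_mono ((integrable_const _).sub
          (integrable_finsetSum _ fun t _ =>
            integrable_comp_of_measurableSet_fiber (hmeas t) (f · (y t))))
        (integrable_const _) fun α => by
          simp only [Pi.sub_apply]
          linarith [(cumulativePayoff_mem_Icc (y := y) hf T x').2,
            sum_nonneg fun t (_ : t ∈ Icc 1 T) => (hf (xtraj α t) (y t)).1]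
    _ = T := by simp

end Payoff

section PerturbedLeader

variable {X Y ι : Type*} [Fintype ι]

def IsApproxFTPL (f : X → Y → ℝ) (y : ℕ → Y) (Γ : X → ι → ℝ) (S : Finset X) (ε : ℝ) (T : ℕ)
    (α : ι → ℝ) (x : ℕ → X) : Prop :=
  ∀ t, 1 ≤ t → t ≤ T + 1 → ∀ x' ∈ S,
    cumulativePayoff f y (t - 1) x' + α ⬝ᵥ Γ x' - ε ≤
      cumulativePayoff f y (t - 1) (x t) + α ⬝ᵥ Γ (x t)

variable {f : X → Y → ℝ} {y : ℕ → Y} {Γ : X → ι → ℝ} {S : Finset X} {ε : ℝ} {T : ℕ}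
  {xtraj : (ι → ℝ) → ℕ → X}

namespace IsApproxFTPL

variable {α : ι → ℝ} {x : ℕ → X}

/-- Be-the-leader, with one `ε` lost per round. -/
theorem cumulativePayoff_add_le (h : IsApproxFTPL f y Γ S ε T α x) (hmem : ∀ t, x t ∈ S)
    {t : ℕ} (ht : t ≤ T) :
    cumulativePayoff f y t (x (t + 1)) + α ⬝ᵥ Γ (x (t + 1)) - t * ε ≤
      ∑ τ ∈ Icc 1 t, f (x (τ + 1)) (y τ) + α ⬝ᵥ Γ (x 1) := by
  induction t with
  | zero => simp [cumulativePayoff]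
  | succ t ih =>
    have hlead := h (t + 1) (by omega) (by omega) _ (hmem (t + 2))
    rw [Nat.add_sub_cancel] at hlead
    rw [cumulativePayoff_succ, sum_Icc_succ_top (by omega)]
    push_cast
    linarith [ih (by omega)]

theorem cumulativePayoff_sub_sum_le (h : IsApproxFTPL f y Γ S ε T α x) (hmem : ∀ t, x t ∈ S)
    {x' : X} (hx' : x' ∈ S) :
    cumulativePayoff f y T x' - ∑ τ ∈ Icc 1 T, f (x (τ + 1)) (y τ) ≤
      α ⬝ᵥ Γ (x 1) - α ⬝ᵥ Γ x' + (T + 1) * ε := by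
  have hlast := h (T + 1) (by omega) le_rfl x' hx'
  rw [Nat.add_sub_cancel] at hlast
  linarith [h.cumulativePayoff_add_le hmem le_rfl]

end IsApproxFTPL

theorem integral_cumulativePayoff_sub_sum_succ_le [Finite X]
    (htraj : ∀ α, IsApproxFTPL f y Γ S ε T α (xtraj α)) (hmem : ∀ α t, xtraj α t ∈ S)
    (hmeas : ∀ t x₀, MeasurableSet {α | xtraj α t = x₀}) (hΓ : ∀ x j, Γ x j ∈ Set.Icc (0 : ℝ) 1)
    {D : Measure ℝ} [IsProbabilityMeasure D] {p L : ℝ}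
    (hD : D ≤ ENNReal.ofReal p • volume.restrict (Set.Icc 0 L)) {x' : X} (hx' : x' ∈ S) :
    ∫ α, (cumulativePayoff f y T x' - ∑ t ∈ Icc 1 T, f (xtraj α (t + 1)) (y t))
        ∂Measure.pi (fun _ : ι => D) ≤ Fintype.card ι * L + (T + 1) * ε := by
  have hDbox : ∀ᵐ a ∂D, a ∈ Set.Icc 0 L := (Measure.absolutelyContinuous_of_le hD).ae_le
    (Measure.ae_smul_measure (ae_restrict_mem measurableSet_Icc) _)
  have hbox : ∀ᵐ α ∂Measure.pi (fun _ : ι => D), ∀ j, α j ∈ Set.Icc 0 L :=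
    ae_all_iff.2 fun j => Measure.tendsto_eval_ae_ae.eventually hDbox
  calc _ ≤ ∫ _, (Fintype.card ι * L + (T + 1) * ε : ℝ) ∂Measure.pi (fun _ : ι => D) := by
        refine integral_mono_ae ((integrable_const _).sub (integrable_finsetSum _ fun t _ =>
          integrable_comp_of_measurableSet_fiber (hmeas (t + 1)) (f · (y t))))
          (integrable_const _) ?_
        filter_upwards [hbox] with α hα
        linarith [(htraj α).cumulativePayoff_sub_sum_le (hmem α) hx',
          dotProduct_le_card_mul hα (hΓ (xtraj α 1)),
          dotProduct_nonneg_of_nonneg (v := α) (w := Γ x') (fun j => (hα j).1)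
            (fun j => (hΓ x' j).1)]
    _ = _ := by simp

variable [DecidableEq ι]

/-- Adding the two near-optimality inequalities gives `(a' - a) (Γ z j - Γ z' j) ≤ 1 + 2ε`,
which the column gap `δ` turns into `Γ z j ≤ Γ z' j`. -/
theorem column_le_of_approx_leaders {F F' : X → ℝ} {b : ι → ℝ} {j : ι}
    {a a' δ : ℝ} {z z' : X}
    (hz : F z' + Function.update b j a ⬝ᵥ Γ z' - ε ≤ F z + Function.update b j a ⬝ᵥ Γ z)
    (hz' : F' z + Function.update b j a' ⬝ᵥ Γ z - ε ≤ F' z' + Function.update b j a' ⬝ᵥ Γ z')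
    (hF : F z - F' z ≤ F z' - F' z' + 1) (hε : 0 ≤ ε) (hδ : 0 < δ)
    (hgap : Γ z j ≠ Γ z' j → δ ≤ |Γ z j - Γ z' j|) (ha : a + (1 + 2 * ε) / δ < a') :
    Γ z j ≤ Γ z' j := by
  have hshift : ∀ v : ι → ℝ,
      Function.update b j a' ⬝ᵥ v - Function.update b j a ⬝ᵥ v = (a' - a) * v j := by
    intro v
    rw [← sub_dotProduct, ← single_dotProduct]
    congr 1
    ext i
    by_cases hi : i = j
    · subst hi; simp
    · simp [hi]
  have hcross : (a' - a) * (Γ z j - Γ z' j) ≤ 1 + 2 * ε := by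
    linarith [hshift (Γ z), hshift (Γ z')]
  by_contra hlt
  have hsep : δ ≤ Γ z j - Γ z' j := by
    have := hgap (ne_of_gt (not_le.1 hlt))
    rwa [abs_of_pos (sub_pos.2 (not_le.1 hlt))] at this
  have hjump : 1 + 2 * ε < (a' - a) * δ := by
    rw [← div_lt_iff₀ hδ]; linarith
  have hpos : 0 < a' - a := by linarith [div_nonneg (by linarith : (0 : ℝ) ≤ 1 + 2 * ε) hδ.le]
  nlinarith

theorem length_le_of_isChain_column_switch
    (htraj : ∀ α, IsApproxFTPL f y Γ S ε T α (xtraj α)) (hmem : ∀ α t, xtraj α t ∈ S)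
    (hf : ∀ x y, f x y ∈ Set.Icc (0 : ℝ) 1) (hε : 0 ≤ ε) {δ : ℝ} (hδ : 0 < δ) {j : ι}
    (hgap : ∀ x ∈ S, ∀ x' ∈ S, Γ x j ≠ Γ x' j → δ ≤ |Γ x j - Γ x' j|) {κ : ℕ}
    (hcol : (S.image fun x => Γ x j).card ≤ κ) {t : ℕ} (ht : 1 ≤ t) (htT : t ≤ T) (b : ι → ℝ)
    {l : List ℝ}
    (hl : ∀ a ∈ l, Γ (xtraj (Function.update b j a) t) j ≠
      Γ (xtraj (Function.update b j a) (t + 1)) j)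
    (hchain : l.IsChain fun a a' => a + (1 + 2 * ε) / δ < a') :
    l.length ≤ κ := by
  have hcross : ∀ a a', a + (1 + 2 * ε) / δ < a' → ∀ s s', s = t ∨ s = t + 1 → s' = t ∨ s' = t + 1 →
      Γ (xtraj (Function.update b j a) s) j ≤ Γ (xtraj (Function.update b j a') s') j := by
    intro a a' ha s s' hs hs'
    exact column_le_of_approx_leaders
      (htraj _ s (by omega) (by omega) _ (hmem _ s'))
      (htraj _ s' (by omega) (by omega) _ (hmem _ s))
      (cumulativePayoff_sub_le hf (by omega) (by omega) _ _) hε hδ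
      (hgap _ (hmem _ s) _ (hmem _ s')) ha
  -- The smaller of the two switching values strictly increases along the chain.
  set v : ℝ → ℝ := fun a => min (Γ (xtraj (Function.update b j a) t) j)
    (Γ (xtraj (Function.update b j a) (t + 1)) j)
  have hv : ∀ a ∈ l, ∀ a', a + (1 + 2 * ε) / δ < a' → v a < v a' := by
    intro a ha a' haa'
    have hmax := min_lt_max.2 (hl a ha)
    exact lt_min
      (hmax.trans_le (max_le (hcross a a' haa' _ _ (.inl rfl) (.inl rfl))
        (hcross a a' haa' _ _ (.inr rfl) (.inl rfl))))
      (hmax.trans_le (max_le (hcross a a' haa' _ _ (.inl rfl) (.inr rfl))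
        (hcross a a' haa' _ _ (.inr rfl) (.inr rfl))))
  have hsorted : (l.map v).Pairwise (· < ·) := List.isChain_iff_pairwise.1
    ((List.isChain_map v).2 (hchain.imp_of_mem_imp fun a a' ha _ h => hv a ha a' h))
  have hsub : (l.map v).toFinset ⊆ S.image fun x => Γ x j := by
    intro w hw
    obtain ⟨a, -, rfl⟩ := List.mem_map.1 (List.mem_toFinset.1 hw)
    rcases min_choice (Γ (xtraj (Function.update b j a) t) j)
      (Γ (xtraj (Function.update b j a) (t + 1)) j) with h | h
    · simp only [v, h]; exact mem_image_of_mem _ (hmem _ t)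
    · simp only [v, h]; exact mem_image_of_mem _ (hmem _ (t + 1))
  calc l.length = (l.map v).toFinset.card :=
        ((List.toFinset_card_of_nodup (hsorted.imp ne_of_lt)).trans (List.length_map _)).symm
    _ ≤ κ := (card_le_card hsub).trans hcol

theorem measure_pi_column_switch_le [Countable X]
    (htraj : ∀ α, IsApproxFTPL f y Γ S ε T α (xtraj α)) (hmem : ∀ α t, xtraj α t ∈ S)
    (hmeas : ∀ t x₀, MeasurableSet {α | xtraj α t = x₀})
    (hf : ∀ x y, f x y ∈ Set.Icc (0 : ℝ) 1) (hε : 0 ≤ ε) {δ : ℝ} (hδ : 0 < δ) {j : ι}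
    (hgap : ∀ x ∈ S, ∀ x' ∈ S, Γ x j ≠ Γ x' j → δ ≤ |Γ x j - Γ x' j|) {κ : ℕ}
    (hcol : (S.image fun x => Γ x j).card ≤ κ) {t : ℕ} (ht : 1 ≤ t) (htT : t ≤ T)
    {D : Measure ℝ} [IsProbabilityMeasure D] {p L : ℝ} (hp : 0 ≤ p)
    (hD : D ≤ ENNReal.ofReal p • volume.restrict (Set.Icc 0 L)) :
    Measure.pi (fun _ : ι => D) {α | Γ (xtraj α t) j ≠ Γ (xtraj α (t + 1)) j} ≤
      ENNReal.ofReal (p * (κ * ((1 + 2 * ε) / δ))) := by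
  have hE : MeasurableSet {α | Γ (xtraj α t) j ≠ Γ (xtraj α (t + 1)) j} :=
    (measurableSet_eq_fun (measurable_comp_of_measurableSet_fiber (hmeas t) (Γ · j))
      (measurable_comp_of_measurableSet_fiber (hmeas (t + 1)) (Γ · j))).compl
  refine measure_pi_le_of_forall_measure_update_le hE j fun b => ?_
  set A := {a | Function.update b j a ∈ {α | Γ (xtraj α t) j ≠ Γ (xtraj α (t + 1)) j}}
  calc D A ≤ ENNReal.ofReal p * volume (A ∩ Set.Icc 0 L) := by
        simpa only [Measure.smul_apply, Measure.restrict_apply' measurableSet_Icc, smul_eq_mul]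
          using hD A
    _ ≤ ENNReal.ofReal p * ENNReal.ofReal (κ * ((1 + 2 * ε) / δ)) := by
        gcongr
        exact volume_le_of_forall_isChain_length_le (bddBelow_Icc.mono Set.inter_subset_right)
          (by positivity) κ fun l hl hchain => length_le_of_isChain_column_switch htraj hmem hf
            hε hδ hgap hcol ht htT b (fun a ha => (hl a ha).1) hchain
    _ = ENNReal.ofReal (p * (κ * ((1 + 2 * ε) / δ))) := (ENNReal.ofReal_mul hp).symm

theorem measure_pi_ne_succ_le [Countable X]
    (htraj : ∀ α, IsApproxFTPL f y Γ S ε T α (xtraj α)) (hmem : ∀ α t, xtraj α t ∈ S)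
    (hmeas : ∀ t x₀, MeasurableSet {α | xtraj α t = x₀})
    (hf : ∀ x y, f x y ∈ Set.Icc (0 : ℝ) 1) (hε : 0 ≤ ε) {δ : ℝ} (hδ : 0 < δ) {κ : ℕ}
    (hrows : ∀ x ∈ S, ∀ x' ∈ S, x ≠ x' → ∃ j, Γ x j ≠ Γ x' j)
    (hcol : ∀ j, (S.image fun x => Γ x j).card ≤ κ)
    (hgap : ∀ j, ∀ x ∈ S, ∀ x' ∈ S, Γ x j ≠ Γ x' j → δ ≤ |Γ x j - Γ x' j|)
    {t : ℕ} (ht : 1 ≤ t) (htT : t ≤ T)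
    {D : Measure ℝ} [IsProbabilityMeasure D] {p L : ℝ} (hp : 0 ≤ p)
    (hD : D ≤ ENNReal.ofReal p • volume.restrict (Set.Icc 0 L)) :
    Measure.pi (fun _ : ι => D) {α | xtraj α t ≠ xtraj α (t + 1)} ≤
      ENNReal.ofReal (Fintype.card ι * (p * (κ * ((1 + 2 * ε) / δ)))) := by
  calc Measure.pi (fun _ : ι => D) {α | xtraj α t ≠ xtraj α (t + 1)}
      ≤ Measure.pi (fun _ : ι => D) (⋃ j, {α | Γ (xtraj α t) j ≠ Γ (xtraj α (t + 1)) j}) :=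
        measure_mono fun α hα => Set.mem_iUnion.2 (hrows _ (hmem α t) _ (hmem α (t + 1)) hα)
    _ ≤ ∑ j, Measure.pi (fun _ : ι => D) {α | Γ (xtraj α t) j ≠ Γ (xtraj α (t + 1)) j} :=
        measure_iUnion_fintype_le _ _
    _ ≤ ∑ _j : ι, ENNReal.ofReal (p * (κ * ((1 + 2 * ε) / δ))) := sum_le_sum fun j _ =>
        measure_pi_column_switch_le htraj hmem hmeas hf hε hδ (hgap j) (hcol j) ht htT hp hD
    _ = ENNReal.ofReal (Fintype.card ι * (p * (κ * ((1 + 2 * ε) / δ)))) := by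
        rw [sum_const, card_univ, nsmul_eq_mul, ← ENNReal.ofReal_natCast,
          ← ENNReal.ofReal_mul (Nat.cast_nonneg _)]

theorem integral_sum_succ_sub_le [Finite X]
    (htraj : ∀ α, IsApproxFTPL f y Γ S ε T α (xtraj α)) (hmem : ∀ α t, xtraj α t ∈ S)
    (hmeas : ∀ t x₀, MeasurableSet {α | xtraj α t = x₀})
    (hf : ∀ x y, f x y ∈ Set.Icc (0 : ℝ) 1) (hε : 0 ≤ ε) {δ : ℝ} (hδ : 0 < δ) {κ : ℕ}
    (hrows : ∀ x ∈ S, ∀ x' ∈ S, x ≠ x' → ∃ j, Γ x j ≠ Γ x' j)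
    (hcol : ∀ j, (S.image fun x => Γ x j).card ≤ κ)
    (hgap : ∀ j, ∀ x ∈ S, ∀ x' ∈ S, Γ x j ≠ Γ x' j → δ ≤ |Γ x j - Γ x' j|)
    {D : Measure ℝ} [IsProbabilityMeasure D] {p L : ℝ} (hp : 0 ≤ p)
    (hD : D ≤ ENNReal.ofReal p • volume.restrict (Set.Icc 0 L)) :
    ∫ α, ∑ t ∈ Icc 1 T, (f (xtraj α (t + 1)) (y t) - f (xtraj α t) (y t))
        ∂Measure.pi (fun _ : ι => D) ≤
      T * (Fintype.card ι * (p * (κ * ((1 + 2 * ε) / δ)))) := by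
  rw [integral_finsetSum (f := fun t α => f (xtraj α (t + 1)) (y t) - f (xtraj α t) (y t)) _
    fun t _ => (integrable_comp_of_measurableSet_fiber (hmeas (t + 1)) (f · (y t))).sub
      (integrable_comp_of_measurableSet_fiber (hmeas t) (f · (y t)))]
  calc _ ≤ ∑ _t ∈ Icc 1 T, Fintype.card ι * (p * (κ * ((1 + 2 * ε) / δ))) :=
        sum_le_sum fun t ht =>
          (integral_sub_le_measureReal_ne (hmeas (t + 1)) (hmeas t) (hf · (y t))).trans
            (ENNReal.toReal_le_of_le_ofReal (by positivity) (by
              simpa only [ne_comm] using measure_pi_ne_succ_le htraj hmem hmeas hf hε hδ hrows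
                hcol hgap (mem_Icc.1 ht).1 (mem_Icc.1 ht).2 hp hD))
    _ = _ := by simp

theorem integral_cumulativePayoff_sub_sum_le [Finite X]
    (htraj : ∀ α, IsApproxFTPL f y Γ S ε T α (xtraj α)) (hmem : ∀ α t, xtraj α t ∈ S)
    (hmeas : ∀ t x₀, MeasurableSet {α | xtraj α t = x₀})
    (hf : ∀ x y, f x y ∈ Set.Icc (0 : ℝ) 1) (hΓ : ∀ x j, Γ x j ∈ Set.Icc (0 : ℝ) 1)
    (hε : 0 ≤ ε) {δ : ℝ} (hδ : 0 < δ) {κ : ℕ}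
    (hrows : ∀ x ∈ S, ∀ x' ∈ S, x ≠ x' → ∃ j, Γ x j ≠ Γ x' j)
    (hcol : ∀ j, (S.image fun x => Γ x j).card ≤ κ)
    (hgap : ∀ j, ∀ x ∈ S, ∀ x' ∈ S, Γ x j ≠ Γ x' j → δ ≤ |Γ x j - Γ x' j|)
    {D : Measure ℝ} [IsProbabilityMeasure D] {p L : ℝ} (hp : 0 ≤ p)
    (hD : D ≤ ENNReal.ofReal p • volume.restrict (Set.Icc 0 L)) {x' : X} (hx' : x' ∈ S) :
    ∫ α, (cumulativePayoff f y T x' - ∑ t ∈ Icc 1 T, f (xtraj α t) (y t))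
        ∂Measure.pi (fun _ : ι => D) ≤
      Fintype.card ι * L + (T + 1) * ε +
        T * (Fintype.card ι * (p * (κ * ((1 + 2 * ε) / δ)))) := by
  have hcomp : ∀ s t, Integrable (fun α => f (xtraj α s) (y t)) (Measure.pi fun _ : ι => D) :=
    fun s t => integrable_comp_of_measurableSet_fiber (hmeas s) (f · (y t))
  have hsplit : ∀ α, cumulativePayoff f y T x' - ∑ t ∈ Icc 1 T, f (xtraj α t) (y t) =
      (cumulativePayoff f y T x' - ∑ t ∈ Icc 1 T, f (xtraj α (t + 1)) (y t)) +
        ∑ t ∈ Icc 1 T, (f (xtraj α (t + 1)) (y t) - f (xtraj α t) (y t)) := by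
    intro α; rw [sum_sub_distrib]; ring
  simp_rw [hsplit]
  rw [integral_add]
  · exact add_le_add (integral_cumulativePayoff_sub_sum_succ_le htraj hmem hmeas hΓ hD hx')
      (integral_sum_succ_sub_le htraj hmem hmeas hf hε hδ hrows hcol hgap hp hD)
  · exact (integrable_const _).sub (integrable_finsetSum _ fun t _ => hcomp (t + 1) t)
  · exact integrable_finsetSum _ fun t _ => (hcomp (t + 1) t).sub (hcomp t t)

end PerturbedLeader

theorem c_regret_via_maximal_in_range_general
    {X Y : Type*} [Fintype X] [Nonempty X]
    (f : X → Y → ℝ) (hf : ∀ x y, f x y ∈ Set.Icc (0:ℝ) 1)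
    (T : ℕ) (hT : 1 ≤ T) (y : ℕ → Y)
    (N : ℕ) (hN : 1 ≤ N)
    (Γ : X → Fin N → ℝ) (hΓ : ∀ x j, Γ x j ∈ Set.Icc (0:ℝ) 1)
    (C : ℝ)
    (X' : Finset X) (hX' : X'.Nonempty)
    (hMIR : (X'.sup' hX' fun x => ∑ t ∈ Finset.Icc 1 T, f x (y t)) ≥
      C * (Finset.univ.sup' Finset.univ_nonempty fun x => ∑ t ∈ Finset.Icc 1 T, f x (y t)))
    (κ' : ℕ) (hκ' : 1 ≤ κ') (δ' : ℝ) (hδ'0 : 0 < δ') (hδ'1 : δ' ≤ 1)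
    -- (κ',δ')-admissibility of the restriction of Γ to the rows in X':
    (hrows : ∀ x ∈ X', ∀ x' ∈ X', x ≠ x' → ∃ j, Γ x j ≠ Γ x' j)
    (hcol : ∀ j : Fin N, (X'.image fun x => Γ x j).card ≤ κ')
    (hgap : ∀ (j : Fin N), ∀ x ∈ X', ∀ x' ∈ X', Γ x j ≠ Γ x' j → δ' ≤ |Γ x j - Γ x' j|)
    (ε : ℝ) (hε : 0 ≤ ε)
    (η : ℝ) (hη : η = Real.sqrt (δ' / ((1 + 2*ε) * T * κ')))
    (D : Measure ℝ)
    (hD : D = ENNReal.ofReal η • volume.restrict (Set.Icc (0:ℝ) (1/η)))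
    (xtraj : (Fin N → ℝ) → ℕ → X)
    (hmem : ∀ (α : Fin N → ℝ) (t : ℕ), xtraj α t ∈ X')
    (hmeas : ∀ (t : ℕ) (x₀ : X), MeasurableSet {α : Fin N → ℝ | xtraj α t = x₀})
    -- ε-approximate Generalized-FTPL trajectory within X':
    (htraj : ∀ (α : Fin N → ℝ) (t : ℕ), 1 ≤ t → t ≤ T + 1 → ∀ x' ∈ X',
      (∑ τ ∈ Finset.Icc 1 (t-1), f (xtraj α t) (y τ)) + (∑ j, α j * Γ (xtraj α t) j) ≥
      (∑ τ ∈ Finset.Icc 1 (t-1), f x' (y τ)) + (∑ j, α j * Γ x' j) - ε) :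
    ∫ α, (C * (Finset.univ.sup' Finset.univ_nonempty fun x => ∑ t ∈ Finset.Icc 1 T, f x (y t)) -
          ∑ t ∈ Finset.Icc 1 T, f (xtraj α t) (y t))
        ∂(Measure.pi fun _ : Fin N => D) ≤
      3 * N * Real.sqrt ((1 + 2*ε) * T * κ' / δ') + ε * T := by
  have hη0 : 0 < η := hη ▸ Real.sqrt_pos.2 (by positivity)
  have hsq : η ^ 2 * ((1 + 2 * ε) * T * κ') = δ' := by
    rw [hη, Real.sq_sqrt (by positivity), div_mul_cancel₀ _ (by positivity)]
  have hL : Real.sqrt ((1 + 2 * ε) * T * κ' / δ') = 1 / η := by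
    rw [hη, one_div, ← Real.sqrt_inv, inv_div]
  have hK : δ' ≤ (1 + 2 * ε) * T * κ' := hδ'1.trans <| one_le_mul_of_one_le_of_one_le
    (one_le_mul_of_one_le_of_one_le (by linarith) (by exact_mod_cast hT)) (by exact_mod_cast hκ')
  have hL1 : 1 ≤ 1 / η := hL ▸ Real.one_le_sqrt.2 ((one_le_div hδ'0).2 hK)
  have : IsProbabilityMeasure D := hD ▸ isProbabilityMeasure_smul_restrict_Icc hη0
  obtain ⟨xs, hxs, hxs_max⟩ := exists_mem_eq_sup' hX' fun x => ∑ t ∈ Icc 1 T, f x (y t)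
  have hR : Integrable (fun α => ∑ t ∈ Icc 1 T, f (xtraj α t) (y t)) (Measure.pi fun _ => D) :=
    integrable_finsetSum _ fun t _ => integrable_comp_of_measurableSet_fiber (hmeas t) (f · (y t))
  have hregret := integral_cumulativePayoff_sub_sum_le htraj hmem hmeas hf hΓ hε hδ'0 hrows hcol
    hgap hη0.le hD.le hxs
  have hcancel : (T : ℝ) * (N * (η * (κ' * ((1 + 2 * ε) / δ')))) = N * (1 / η) := by
    rw [← hsq]; field_simp
  rw [Fintype.card_fin, hcancel] at hregret
  rw [hL]
  calc _ ≤ ∫ α, (cumulativePayoff f y T xs - ∑ t ∈ Icc 1 T, f (xtraj α t) (y t))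
        ∂Measure.pi (fun _ => D) :=
        integral_mono ((integrable_const _).sub hR) ((integrable_const _).sub hR) fun α => by
          simp only [Pi.sub_apply, cumulativePayoff, ← hxs_max]; linarith
    _ ≤ 3 * N * (1 / η) + ε * T := by
      rcases le_or_gt ε (N * (1 / η)) with hε' | hε'
      · linarith
      · have hε1 : 1 ≤ ε :=
          (one_le_mul_of_one_le_of_one_le (by exact_mod_cast hN) hL1).trans hε'.le
        nlinarith [integral_cumulativePayoff_sub_sum_le_horizon
          (μ := Measure.pi fun _ => D) (y := y) (T := T) hmeas hf xs,
          show 0 ≤ 3 * (N : ℝ) * (1 / η) by positivity]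

/-- **C-regret via Maximal-in-Range restriction.**
Let `0 < C ≤ 1` and let `X' ⊆ X` be a nonempty subset whose best action attains a
`C` fraction of the best action in `X`. If the restriction of `Γ` to `X'` is
`(κ',δ')`-admissible, `η = √(δ'/((1+2ε)Tκ'))`, the coordinates of `α` are i.i.d.
uniform on `[0,1/η]`, and `xtraj α` is an ε-approximate Generalized-FTPL trajectory
within `X'`, then
`E[ C·max_{x∈X} Σ_t f(x,y_t) − Σ_t f(x_t(α),y_t) ] ≤ 3N√((1+2ε)Tκ'/δ') + εT`. -/
theorem c_regret_via_maximal_in_range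
    {X Y : Type*} [Fintype X] [Nonempty X]
    (f : X → Y → ℝ) (hf : ∀ x y, f x y ∈ Set.Icc (0:ℝ) 1)
    (T : ℕ) (hT : 1 ≤ T) (y : ℕ → Y)
    (N : ℕ) (hN : 1 ≤ N)
    (Γ : X → Fin N → ℝ) (hΓ : ∀ x j, Γ x j ∈ Set.Icc (0:ℝ) 1)
    (C : ℝ) (hC0 : 0 < C) (hC1 : C ≤ 1)
    (X' : Finset X) (hX' : X'.Nonempty)
    (hMIR : (X'.sup' hX' fun x => ∑ t ∈ Finset.Icc 1 T, f x (y t)) ≥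
      C * (Finset.univ.sup' Finset.univ_nonempty fun x => ∑ t ∈ Finset.Icc 1 T, f x (y t)))
    (κ' : ℕ) (hκ' : 1 ≤ κ') (δ' : ℝ) (hδ'0 : 0 < δ') (hδ'1 : δ' ≤ 1)
    -- (κ',δ')-admissibility of the restriction of Γ to the rows in X':
    (hrows : ∀ x ∈ X', ∀ x' ∈ X', x ≠ x' → ∃ j, Γ x j ≠ Γ x' j)
    (hcol : ∀ j : Fin N, (X'.image fun x => Γ x j).card ≤ κ')
    (hgap : ∀ (j : Fin N), ∀ x ∈ X', ∀ x' ∈ X', Γ x j ≠ Γ x' j → δ' ≤ |Γ x j - Γ x' j|)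
    (ε : ℝ) (hε : 0 ≤ ε)
    (η : ℝ) (hη : η = Real.sqrt (δ' / ((1 + 2*ε) * T * κ')))
    (D : Measure ℝ)
    (hD : D = ENNReal.ofReal η • volume.restrict (Set.Icc (0:ℝ) (1/η)))
    (xtraj : (Fin N → ℝ) → ℕ → X)
    (hmem : ∀ (α : Fin N → ℝ) (t : ℕ), xtraj α t ∈ X')
    (hmeas : ∀ (t : ℕ) (x₀ : X), MeasurableSet {α : Fin N → ℝ | xtraj α t = x₀})
    -- ε-approximate Generalized-FTPL trajectory within X':
    (htraj : ∀ (α : Fin N → ℝ) (t : ℕ), 1 ≤ t → t ≤ T + 1 → ∀ x' ∈ X',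
      (∑ τ ∈ Finset.Icc 1 (t-1), f (xtraj α t) (y τ)) + (∑ j, α j * Γ (xtraj α t) j) ≥
      (∑ τ ∈ Finset.Icc 1 (t-1), f x' (y τ)) + (∑ j, α j * Γ x' j) - ε) :
    ∫ α, (C * (Finset.univ.sup' Finset.univ_nonempty fun x => ∑ t ∈ Finset.Icc 1 T, f x (y t)) -
          ∑ t ∈ Finset.Icc 1 T, f (xtraj α t) (y t))
        ∂(Measure.pi fun _ : Fin N => D) ≤
      3 * N * Real.sqrt ((1 + 2*ε) * T * κ' / δ') + ε * T :=
  c_regret_via_maximal_in_range_general f hf T hT y N hN Γ hΓ C X' hX' hMIR κ' hκ' δ' hδ'0 hδ'1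
    hrows hcol hgap ε hε η hη D hD xtraj hmem hmeas htraj
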